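/- arXiv:math/0210435 — 2 statements merged into one kernel-verified Lean document; each statement's English description precedes it below -/
import Mathlib

section
/- Let G be a locally finite tree and let e₀, e₁, e₂ be three pairwise inequivalent rays in G. Then there is a unique vertex v of G (the crossroad of the three ends) with the property that there exist rays r₀, r₁, r₂ starting at v, with r_i equivalent to e_i for each i, whose second vertices r₀(1), r₁(1), r₂(1) are pairwise distinct. -/
/-- A ray in a simple graph: an injective sequence of vertices with consecutive
vertices adjacent. -/
def IsRay {V : Type*} (G : SimpleGraph V) (r : ℕ → V) : Prop :=
  Function.Injective r ∧ ∀ n, G.Adj (r n) (r (n + 1))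

/-- Two rays are equivalent (define the same end) if their images differ by at
most finitely many vertices. -/
def RayEquiv {V : Type*} (r r' : ℕ → V) : Prop :=
  ((Set.range r \ Set.range r') ∪ (Set.range r' \ Set.range r)).Finite

namespace Crossroad

open SimpleGraph

variable {V : Type*} {G : SimpleGraph V}

/-- The walk along a function `t` from `t 0` to `t L`. -/
def fseg (G : SimpleGraph V) (t : ℕ → V) :
    (L : ℕ) → (∀ i < L, G.Adj (t i) (t (i + 1))) → G.Walk (t 0) (t L)
  | 0, _ => Walk.nil
  | (L + 1), h =>
      (fseg G t L (fun i hi => h i (Nat.lt_succ_of_lt hi))).concat (h L (Nat.lt_succ_self L))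

lemma fseg_support (t : ℕ → V) (L : ℕ) (h : ∀ i < L, G.Adj (t i) (t (i + 1))) :
    (fseg G t L h).support = (List.range (L + 1)).map t := by
  induction L with
  | zero => simp [fseg, List.range_succ]
  | succ L ih =>
      rw [fseg, Walk.support_concat, ih]
      simp [List.range_succ]

lemma fseg_isPath (t : ℕ → V) (L : ℕ) (h : ∀ i < L, G.Adj (t i) (t (i + 1)))
    (hinj : ∀ x ≤ L, ∀ y ≤ L, t x = t y → x = y) :
    (fseg G t L h).IsPath := by
  rw [Walk.isPath_def, fseg_support]
  refine List.Nodup.map_on ?_ List.nodup_range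
  intro x hx y hy hxy
  exact hinj x (by simpa [Nat.lt_succ_iff] using hx) y (by simpa [Nat.lt_succ_iff] using hy) hxy

lemma noReconnect (hT : G.IsTree) {r s : ℕ → V} (hr : IsRay G r) (hs : IsRay G s)
    (h0 : r 0 = s 0) (h1 : r 1 ≠ s 1) {m n : ℕ} (hm : 1 ≤ m) (hn : 1 ≤ n) :
    r m ≠ s n := by
  intro heq
  have hp : (fseg G r m (fun i _ => hr.2 i)).IsPath :=
    fseg_isPath _ _ _ (fun x _ y _ hxy => hr.1 hxy)
  have hq : ((fseg G s n (fun i _ => hs.2 i)).copy h0.symm heq.symm).IsPath := by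
    rw [Walk.isPath_copy]
    exact fseg_isPath _ _ _ (fun x _ y _ hxy => hs.1 hxy)
  have hpq : (⟨_, hp⟩ : G.Path (r 0) (r m)) = ⟨_, hq⟩ := hT.2.path_unique _ _
  have hsup : (fseg G r m (fun i _ => hr.2 i)).support
      = ((fseg G s n (fun i _ => hs.2 i)).copy h0.symm heq.symm).support :=
    congrArg (fun p : G.Path (r 0) (r m) => p.1.support) hpq
  rw [Walk.support_copy, fseg_support, fseg_support] at hsup
  have h2 : ((List.range (m + 1)).map r)[1]? = ((List.range (n + 1)).map s)[1]? := by
    rw [hsup]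
  rw [List.getElem?_map, List.getElem?_map, List.getElem?_range (by omega),
    List.getElem?_range (by omega)] at h2
  exact h1 (by simpa using h2)

lemma rayEquiv_refl (r : ℕ → V) : RayEquiv r r := by
  simp [RayEquiv]

lemma rayEquiv_symm {r s : ℕ → V} (h : RayEquiv r s) : RayEquiv s r := by
  rw [RayEquiv, Set.union_comm]; exact h

lemma rayEquiv_trans {r s t : ℕ → V} (h1 : RayEquiv r s) (h2 : RayEquiv s t) :
    RayEquiv r t := by
  refine (h1.union h2).subset ?_
  intro x hx
  simp only [Set.mem_union, Set.mem_diff] at hx ⊢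
  by_cases hs : x ∈ Set.range s <;> tauto

lemma rayEquiv_inter {r s : ℕ → V} (hr : Function.Injective r) (h : RayEquiv r s) :
    ∃ n m, r n = s m := by
  have hfin : (Set.range r \ Set.range s).Finite := h.subset Set.subset_union_left
  have hinf : (Set.range r \ (Set.range r \ Set.range s)).Infinite :=
    (Set.infinite_range_of_injective hr).diff hfin
  obtain ⟨x, hx1, hx2⟩ := hinf.nonempty
  have hxs : x ∈ Set.range s := by
    by_contra hc; exact hx2 ⟨hx1, hc⟩
  obtain ⟨n, rfl⟩ := hx1
  obtain ⟨m, hm⟩ := hxs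
  exact ⟨n, m, hm.symm⟩

lemma isRay_shift {r : ℕ → V} (hr : IsRay G r) (k : ℕ) : IsRay G (fun n => r (k + n)) := by
  constructor
  · intro a b hab
    have := hr.1 hab
    omega
  · intro n
    have : k + (n + 1) = (k + n) + 1 := by omega
    simpa [this] using hr.2 (k + n)

lemma rayEquiv_shift {r : ℕ → V} (k : ℕ) : RayEquiv (fun n => r (k + n)) r := by
  apply Set.Finite.union
  · have : Set.range (fun n => r (k + n)) \ Set.range r = ∅ := by
      rw [Set.diff_eq_empty]
      rintro x ⟨n, rfl⟩
      exact ⟨k + n, rfl⟩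
    rw [this]; exact Set.finite_empty
  · refine ((Set.finite_Iio k).image r).subset ?_
    rintro x ⟨⟨n, rfl⟩, hx⟩
    refine ⟨n, ?_, rfl⟩
    by_contra hnk
    simp only [Set.mem_Iio, not_lt] at hnk
    exact hx ⟨n - k, by simp only []; congr 1; omega⟩

lemma getVert_mem_support {u v : V} (w : G.Walk u v) {n : ℕ} (hn : n ≤ w.length) :
    w.getVert n ∈ w.support := by
  induction w generalizing n with
  | nil => simp [Walk.getVert]
  | cons h q ih =>
      cases n with
      | zero => simp
      | succ n =>
          rw [Walk.getVert_cons_succ, Walk.support_cons]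
          exact List.mem_cons_of_mem _ (ih (by simpa [Walk.length_cons] using hn))

lemma getVert_injOn {u v : V} {w : G.Walk u v} (hw : w.IsPath) :
    ∀ x ≤ w.length, ∀ y ≤ w.length, w.getVert x = w.getVert y → x = y := by
  induction w with
  | nil => intro x hx y hy _; simp only [Walk.length_nil, Nat.le_zero] at hx hy; omega
  | cons h q ih =>
      intro x hx y hy hxy
      have hq : q.IsPath := hw.of_cons
      have hns : _ ∉ q.support := (SimpleGraph.Walk.cons_isPath_iff _ _).mp hw |>.2
      cases x with
      | zero =>
          cases y with
          | zero => rfl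
          | succ y =>
              exfalso
              rw [Walk.getVert_zero, Walk.getVert_cons_succ] at hxy
              exact hns (hxy ▸ getVert_mem_support q (by simpa [Walk.length_cons] using hy))
      | succ x =>
          cases y with
          | zero =>
              exfalso
              rw [Walk.getVert_zero, Walk.getVert_cons_succ] at hxy
              exact hns (hxy ▸ getVert_mem_support q (by simpa [Walk.length_cons] using hx))
          | succ y =>
              rw [Walk.getVert_cons_succ, Walk.getVert_cons_succ] at hxy
              have := ih hq x (by simpa [Walk.length_cons] using hx)
                y (by simpa [Walk.length_cons] using hy) hxy
              omega

lemma split_exists {f g : ℕ → V} (h0 : f 0 = g 0) (hne : f ≠ g) :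
    ∃ a, (∀ k ≤ a, f k = g k) ∧ f (a + 1) ≠ g (a + 1) := by
  have hex : ∃ n, f n ≠ g n := by
    by_contra hc; push_neg at hc; exact hne (funext hc)
  classical
  have hD : f (Nat.find hex) ≠ g (Nat.find hex) := Nat.find_spec hex
  have hpos : 0 < Nat.find hex := by
    rcases Nat.eq_zero_or_pos (Nat.find hex) with h | h
    · exact absurd (h ▸ hD) (by simpa using h0)
    · exact h
  refine ⟨Nat.find hex - 1, fun k hk => ?_, ?_⟩
  · have := Nat.find_min hex (show k < Nat.find hex by omega)
    exact not_not.mp this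
  · have : Nat.find hex - 1 + 1 = Nat.find hex := by omega
    rw [this]; exact hD

lemma split_ge_min {f g h : ℕ → V} {a b c : ℕ}
    (hfg : ∀ k ≤ a, f k = g k) (hfh : ∀ k ≤ b, f k = h k)
    (hgh : g (c + 1) ≠ h (c + 1)) : min a b ≤ c := by
  by_contra hlt
  push_neg at hlt
  exact hgh ((hfg (c + 1) (by omega)).symm.trans (hfh (c + 1) (by omega)))

lemma exists_ray_from (hT : G.IsTree) (u : V) {e : ℕ → V} (he : IsRay G e) :
    ∃ f, IsRay G f ∧ f 0 = u ∧ RayEquiv f e := by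
  classical
  obtain ⟨w⟩ := (hT.1.preconnected u (e 0) : G.Reachable u (e 0))
  set p : G.Walk u (e 0) := w.toPath.1 with hpdef
  have hppath : p.IsPath := w.toPath.2
  have hS : {n | e n ∈ p.support}.Finite := by
    have : {n | e n ∈ p.support} = e ⁻¹' {x | x ∈ p.support} := rfl
    rw [this]
    exact Set.Finite.preimage (he.1.injOn) (p.support.finite_toSet)
  have hS0 : 0 ∈ hS.toFinset := by
    simp only [Set.Finite.mem_toFinset, Set.mem_setOf_eq]
    exact Walk.end_mem_support p
  set k : ℕ := hS.toFinset.max' ⟨0, hS0⟩ with hkdef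
  have hk : e k ∈ p.support := by
    have := hS.toFinset.max'_mem ⟨0, hS0⟩
    simpa only [Set.Finite.mem_toFinset, Set.mem_setOf_eq] using this
  have hkmax : ∀ n, e n ∈ p.support → n ≤ k := by
    intro n hn
    exact hS.toFinset.le_max' n (by simpa only [Set.Finite.mem_toFinset, Set.mem_setOf_eq] using hn)
  set q : G.Walk u (e k) := p.takeUntil (e k) hk with hqdef
  have hqpath : q.IsPath := hppath.takeUntil hk
  set L : ℕ := q.length with hLdef
  have hqsub : ∀ x, x ∈ q.support → x ∈ p.support := fun x hx =>
    Walk.support_takeUntil_subset p hk hx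
  have hnot : ∀ m, k < m → e m ∉ q.support := by
    intro m hm hmem
    exact absurd (hkmax m (hqsub _ hmem)) (by omega)
  set f : ℕ → V := fun n => if n ≤ L then q.getVert n else e (k + (n - L)) with hfdef
  have hfle : ∀ n, n ≤ L → f n = q.getVert n := by
    intro n hn; simp only [hfdef, if_pos hn]
  have hfgt : ∀ n, L < n → f n = e (k + (n - L)) := by
    intro n hn; simp only [hfdef, if_neg (by omega : ¬ n ≤ L)]
  refine ⟨f, ⟨?_, ?_⟩, ?_, ?_⟩
  · -- injective
    intro x y hxy
    rcases le_or_gt x L with hx | hx <;> rcases le_or_gt y L with hy | hy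
    · rw [hfle x hx, hfle y hy] at hxy
      exact getVert_injOn hqpath x hx y hy hxy
    · rw [hfle x hx, hfgt y hy] at hxy
      exact absurd (hxy ▸ getVert_mem_support q hx) (hnot (k + (y - L)) (by omega))
    · rw [hfgt x hx, hfle y hy] at hxy
      exact absurd (hxy.symm ▸ getVert_mem_support q hy) (hnot (k + (x - L)) (by omega))
    · rw [hfgt x hx, hfgt y hy] at hxy
      have := he.1 hxy
      omega
  · -- adjacency
    intro n
    rcases lt_trichotomy n L with hn | hn | hn
    · rw [hfle n (by omega), hfle (n + 1) (by omega)]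
      exact q.adj_getVert_succ hn
    · rw [hfle n (le_of_eq hn), hfgt (n + 1) (by omega)]
      have h1 : q.getVert n = e k := by rw [hn]; exact q.getVert_length
      have h2 : k + (n + 1 - L) = k + 1 := by omega
      rw [h1, h2]
      exact he.2 k
    · rw [hfgt n hn, hfgt (n + 1) (by omega)]
      have h2 : k + (n + 1 - L) = (k + (n - L)) + 1 := by omega
      rw [h2]
      exact he.2 _
  · -- starts at u
    rw [hfle 0 (by omega)]
    exact q.getVert_zero
  · -- RayEquiv
    apply Set.Finite.union
    · refine (q.support.finite_toSet).subset ?_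
      rintro x ⟨⟨n, rfl⟩, hx⟩
      by_cases hn : n ≤ L
      · rw [hfle n hn]
        exact getVert_mem_support q hn
      · exfalso
        exact hx ⟨k + (n - L), (hfgt n (by omega)).symm⟩
    · refine ((Set.finite_Iio k).image e).subset ?_
      rintro x ⟨⟨m, rfl⟩, hx⟩
      refine ⟨m, ?_, rfl⟩
      simp only [Set.mem_Iio]
      by_contra hmk
      push_neg at hmk
      rcases eq_or_lt_of_le hmk with heq | hlt
      · exact hx ⟨L, by rw [hfle L le_rfl, ← heq]; exact q.getVert_length⟩
      · refine hx ⟨L + (m - k), ?_⟩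
        rw [hfgt (L + (m - k)) (by omega)]
        congr 1
        omega

lemma core (hT : G.IsTree) {f g h : ℕ → V} (hf : IsRay G f) (hg : IsRay G g) (hh : IsRay G h)
    {a b : ℕ} (hab : a ≤ b)
    (hfg : ∀ k ≤ a, f k = g k) (hfg' : f (a + 1) ≠ g (a + 1))
    (hfh : ∀ k ≤ b, f k = h k) (hfh' : f (b + 1) ≠ h (b + 1))
    (hgh' : g (a + 1) ≠ h (a + 1)) :
    ∃ (v : V) (rf rg rh : ℕ → V), IsRay G rf ∧ IsRay G rg ∧ IsRay G rh ∧
      rf 0 = v ∧ rg 0 = v ∧ rh 0 = v ∧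
      RayEquiv rf f ∧ RayEquiv rg g ∧ RayEquiv rh h ∧
      rf 1 ≠ rg 1 ∧ rf 1 ≠ rh 1 ∧ rg 1 ≠ rh 1 := by
  set d : ℕ := b - a with hddef
  set rf : ℕ → V := fun n => f (b + n) with hrfdef
  set rh : ℕ → V := fun n => h (b + n) with hrhdef
  set rg : ℕ → V := fun n => if n < d then f (b - n) else g (n - d + a) with hrgdef
  have hrglt : ∀ n, n < d → rg n = f (b - n) := by
    intro n hn; simp only [hrgdef, if_pos hn]
  have hrgge : ∀ n, d ≤ n → rg n = g (n - d + a) := by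
    intro n hn; simp only [hrgdef, if_neg (by omega : ¬ n < d)]
  -- no-reconnect for the shifted rays at f a = g a
  have NR : ∀ s t, 1 ≤ s → 1 ≤ t → f (a + s) ≠ g (a + t) := by
    intro s t hs ht
    exact noReconnect hT (isRay_shift hf a) (isRay_shift hg a)
      (by simpa using hfg a le_rfl) (by simpa using hfg') hs ht
  have hga : g a = f a := (hfg a le_rfl).symm
  refine ⟨f b, rf, rg, rh, isRay_shift hf b, ⟨?_, ?_⟩, isRay_shift hh b,
    ?_, ?_, ?_, ?_, ?_, ?_, ?_, ?_, ?_⟩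
  · -- rg injective
    intro x y hxy
    rcases lt_or_ge x d with hx | hx <;> rcases lt_or_ge y d with hy | hy
    · rw [hrglt x hx, hrglt y hy] at hxy
      have := hf.1 hxy
      omega
    · rw [hrglt x hx, hrgge y hy] at hxy
      rcases Nat.eq_or_lt_of_le hy with heq | hlt
      · rw [← heq, Nat.sub_self, Nat.zero_add, hga] at hxy
        have := hf.1 hxy
        omega
      · refine absurd ?_ (NR (b - x - a) (y - d) (by omega) (by omega))
        rw [show a + (b - x - a) = b - x by omega, show a + (y - d) = y - d + a by omega]
        exact hxy
    · rw [hrgge x hx, hrglt y hy] at hxy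
      rcases Nat.eq_or_lt_of_le hx with heq | hlt
      · rw [← heq, Nat.sub_self, Nat.zero_add, hga] at hxy
        have := hf.1 hxy.symm
        omega
      · refine absurd ?_ (NR (b - y - a) (x - d) (by omega) (by omega))
        rw [show a + (b - y - a) = b - y by omega, show a + (x - d) = x - d + a by omega]
        exact hxy.symm
    · rw [hrgge x hx, hrgge y hy] at hxy
      have := hg.1 hxy
      omega
  · -- rg adjacency
    intro n
    rcases lt_trichotomy (n + 1) d with hn | hn | hn
    · rw [hrglt n (by omega), hrglt (n + 1) (by omega)]
      have : b - n = (b - (n + 1)) + 1 := by omega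
      rw [this]
      exact (hf.2 _).symm
    · rw [hrglt n (by omega), hrgge (n + 1) (le_of_eq hn.symm)]
      have h1 : b - n = a + 1 := by omega
      have h2 : n + 1 - d + a = a := by omega
      rw [h1, h2, hga]
      exact (hf.2 a).symm
    · rw [hrgge n (by omega), hrgge (n + 1) (by omega)]
      have : n + 1 - d + a = (n - d + a) + 1 := by omega
      rw [this]
      exact hg.2 _
  · -- rf 0 = f b
    show f (b + 0) = f b
    rw [Nat.add_zero]
  · -- rg 0 = f b
    rcases Nat.eq_zero_or_pos d with hd | hd
    · rw [hrgge 0 (by omega)]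
      have : 0 - d + a = a := by omega
      rw [this, hga]
      congr 1
      omega
    · rw [hrglt 0 hd, Nat.sub_zero]
  · -- rh 0 = f b
    show h (b + 0) = f b
    rw [Nat.add_zero]
    exact (hfh b le_rfl).symm
  · -- RayEquiv rf f
    exact rayEquiv_shift b
  · -- RayEquiv rg g
    apply Set.Finite.union
    · refine ((Set.finite_Iic b).image f).subset ?_
      rintro x ⟨⟨n, rfl⟩, hx⟩
      rcases lt_or_ge n d with hn | hn
      · exact ⟨b - n, by simp, (hrglt n hn).symm⟩
      · exact absurd ⟨n - d + a, (hrgge n hn).symm⟩ hx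
    · refine ((Set.finite_Iio a).image g).subset ?_
      rintro x ⟨⟨m, rfl⟩, hx⟩
      refine ⟨m, ?_, rfl⟩
      simp only [Set.mem_Iio]
      by_contra hma
      push_neg at hma
      refine hx ⟨m - a + d, ?_⟩
      rw [hrgge (m - a + d) (by omega)]
      congr 1
      omega
  · -- RayEquiv rh h
    exact rayEquiv_shift b
  · -- rf 1 ≠ rg 1
    simp only [hrfdef]
    rcases Nat.eq_zero_or_pos d with hd | hd
    · rw [hrgge 1 (by omega)]
      have h1 : 1 - d + a = a + 1 := by omega
      have h2 : b + 1 = a + 1 := by omega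
      rw [h1, h2]
      exact hfg'
    · have hrg1 : rg 1 = f (b - 1) := by
        rcases Nat.lt_or_ge 1 d with h1 | h1
        · exact hrglt 1 h1
        · rw [hrgge 1 h1]
          have hd1 : d = 1 := by omega
          have : 1 - d + a = a := by omega
          rw [this, hga]
          congr 1
          omega
      rw [hrg1]
      intro hcon
      have := hf.1 hcon
      omega
  · -- rf 1 ≠ rh 1
    simp only [hrfdef, hrhdef]
    exact hfh'
  · -- rg 1 ≠ rh 1
    simp only [hrhdef]
    rcases Nat.eq_zero_or_pos d with hd | hd
    · rw [hrgge 1 (by omega)]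
      have h1 : 1 - d + a = a + 1 := by omega
      have h2 : b + 1 = a + 1 := by omega
      rw [h1, h2]
      exact hgh'
    · have hrg1 : rg 1 = f (b - 1) := by
        rcases Nat.lt_or_ge 1 d with h1 | h1
        · exact hrglt 1 h1
        · rw [hrgge 1 h1]
          have : 1 - d + a = a := by omega
          rw [this, hga]
          congr 1
          omega
      rw [hrg1]
      intro hcon
      have : f (b - 1) = h (b - 1) := hfh (b - 1) (by omega)
      rw [this] at hcon
      have := hh.1 hcon
      omega

lemma pair (hT : G.IsTree) {v v' : V} {p q p' q' : ℕ → V}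
    (hp : IsRay G p) (hq : IsRay G q) (hp' : IsRay G p') (hq' : IsRay G q')
    (hp0 : p 0 = v) (hq0 : q 0 = v) (hpq : p 1 ≠ q 1)
    (hp'0 : p' 0 = v') (hq'0 : q' 0 = v')
    {np mp nq mq : ℕ} (hxp : p np = p' mp) (hxq : q nq = q' mq) :
    (∃ k ≤ mp, p' k = v) ∨ (∃ k ≤ mq, q' k = v) := by
  classical
  by_contra hcon
  push_neg at hcon
  obtain ⟨hc1, hc2⟩ := hcon
  -- the path from p np to q nq through v
  set c : ℕ → V := fun n => if n < np then p (np - n) else q (n - np) with hcdef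
  set L : ℕ := np + nq with hLdef
  have hclt : ∀ n, n < np → c n = p (np - n) := by
    intro n hn; simp only [hcdef, if_pos hn]
  have hcge : ∀ n, np ≤ n → c n = q (n - np) := by
    intro n hn; simp only [hcdef, if_neg (by omega : ¬ n < np)]
  have hc0 : c 0 = p np := by
    rcases Nat.eq_zero_or_pos np with h0 | h0
    · rw [hcge 0 (by omega), h0, Nat.sub_zero, hq0, ← hp0]
    · rw [hclt 0 h0, Nat.sub_zero]
  have hcL : c L = q nq := by
    rw [hcge L (by omega)]
    congr 1
    omega
  have hcv : c np = v := by
    rw [hcge np le_rfl, Nat.sub_self, hq0]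
  have hadj : ∀ i < L, G.Adj (c i) (c (i + 1)) := by
    intro i hi
    rcases lt_trichotomy (i + 1) np with h1 | h1 | h1
    · rw [hclt i (by omega), hclt (i + 1) h1]
      rw [show np - i = (np - (i + 1)) + 1 by omega]
      exact (hp.2 _).symm
    · rw [hclt i (by omega), hcge (i + 1) (le_of_eq h1.symm)]
      rw [show np - i = 1 by omega, show i + 1 - np = 0 by omega, hq0, ← hp0]
      exact (hp.2 0).symm
    · rw [hcge i (by omega), hcge (i + 1) (by omega)]
      rw [show i + 1 - np = (i - np) + 1 by omega]
      exact hq.2 _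
  have NR : ∀ s t, 1 ≤ s → 1 ≤ t → p s ≠ q t :=
    fun s t hs ht => noReconnect hT hp hq (hp0.trans hq0.symm) hpq hs ht
  have hinj : ∀ x ≤ L, ∀ y ≤ L, c x = c y → x = y := by
    intro x hx y hy hxy
    rcases lt_or_ge x np with h1 | h1 <;> rcases lt_or_ge y np with h2 | h2
    · rw [hclt x h1, hclt y h2] at hxy
      have := hp.1 hxy; omega
    · rw [hclt x h1, hcge y h2] at hxy
      rcases Nat.eq_or_lt_of_le h2 with heq | hlt
      · rw [← heq, Nat.sub_self, hq0, ← hp0] at hxy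
        have := hp.1 hxy; omega
      · exact absurd hxy (NR (np - x) (y - np) (by omega) (by omega))
    · rw [hcge x h1, hclt y h2] at hxy
      rcases Nat.eq_or_lt_of_le h1 with heq | hlt
      · rw [← heq, Nat.sub_self, hq0, ← hp0] at hxy
        have := hp.1 hxy.symm; omega
      · exact absurd hxy.symm (NR (np - y) (x - np) (by omega) (by omega))
    · rw [hcge x h1, hcge y h2] at hxy
      have := hq.1 hxy; omega
  -- the unique path
  have hPpath : (fseg G c L hadj).IsPath := fseg_isPath _ _ _ hinj
  -- the walk through v' avoiding v
  set Wp : G.Walk (p' 0) (p' mp) := fseg G p' mp (fun i _ => hp'.2 i) with hWpdef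
  set Wq : G.Walk (q' 0) (q' mq) := fseg G q' mq (fun i _ => hq'.2 i) with hWqdef
  have heq1 : p' mp = c 0 := by rw [hc0]; exact hxp.symm
  have heq2 : q' mq = c L := by rw [hcL]; exact hxq.symm
  set Wq2 : G.Walk (p' 0) (q' mq) := Wq.copy (hq'0.trans hp'0.symm) rfl with hWq2def
  set W : G.Walk (c 0) (c L) := ((Wp.reverse.append Wq2).copy heq1 heq2) with hWdef
  have hWsup : ∀ x, x ∈ W.support → x ∈ Wp.support ∨ x ∈ Wq.support := by
    intro x hx
    rw [hWdef, Walk.support_copy, Walk.mem_support_append_iff, Walk.support_reverse,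
      List.mem_reverse, hWq2def, Walk.support_copy] at hx
    exact hx
  -- supports of Wp, Wq
  have hWpsup : Wp.support = (List.range (mp + 1)).map p' := fseg_support _ _ _
  have hWqsup : Wq.support = (List.range (mq + 1)).map q' := fseg_support _ _ _
  have hvW : v ∉ W.support := by
    intro hv
    rcases hWsup v hv with hv | hv
    · rw [hWpsup] at hv
      obtain ⟨k, hk, hkv⟩ := List.mem_map.mp hv
      exact hc1 k (by simpa [Nat.lt_succ_iff] using hk) hkv
    · rw [hWqsup] at hv
      obtain ⟨k, hk, hkv⟩ := List.mem_map.mp hv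
      exact hc2 k (by simpa [Nat.lt_succ_iff] using hk) hkv
  -- replace W by a path with smaller support
  have hW'sub : ∀ x, x ∈ W.toPath.1.support → x ∈ W.support :=
    fun x hx => Walk.support_toPath_subset W hx
  have hPeq : (⟨fseg G c L hadj, hPpath⟩ : G.Path (c 0) (c L)) = W.toPath :=
    hT.2.path_unique _ _
  have hvP : v ∈ (fseg G c L hadj).support := by
    rw [fseg_support]
    exact List.mem_map.mpr ⟨np, List.mem_range.mpr (by omega), hcv⟩
  have : v ∈ W.toPath.1.support := by
    rw [← hPeq]
    exact hvP
  exact hvW (hW'sub v this)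

lemma crossroad_unique (hT : G.IsTree) {v v' : V} {r0 r1 r2 s0 s1 s2 : ℕ → V}
    (h0 : IsRay G r0) (h1 : IsRay G r1) (h2 : IsRay G r2)
    (h0' : IsRay G s0) (h1' : IsRay G s1) (h2' : IsRay G s2)
    (ha0 : r0 0 = v) (ha1 : r1 0 = v) (ha2 : r2 0 = v)
    (hb0 : s0 0 = v') (hb1 : s1 0 = v') (hb2 : s2 0 = v')
    (hd01 : r0 1 ≠ r1 1) (hd02 : r0 1 ≠ r2 1) (hd12 : r1 1 ≠ r2 1)
    (hd01' : s0 1 ≠ s1 1) (hd02' : s0 1 ≠ s2 1) (hd12' : s1 1 ≠ s2 1)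
    (he0 : RayEquiv r0 s0) (he1 : RayEquiv r1 s1) (he2 : RayEquiv r2 s2) :
    v' = v := by
  by_contra hne
  obtain ⟨n0, m0, hx0⟩ := rayEquiv_inter h0.1 he0
  obtain ⟨n1, m1, hx1⟩ := rayEquiv_inter h1.1 he1
  obtain ⟨n2, m2, hx2⟩ := rayEquiv_inter h2.1 he2
  have key : ∀ (si sj : ℕ → V) (ki kj : ℕ), IsRay G si → IsRay G sj →
      si 0 = v' → sj 0 = v' → si 1 ≠ sj 1 → si ki = v → sj kj = v → False := by
    intro si sj ki kj hsi hsj hsi0 hsj0 hne2 hkiv hkjv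
    have hki : 1 ≤ ki := by
      rcases Nat.eq_zero_or_pos ki with hz | hpos
      · exact absurd (hsi0.symm.trans (hz ▸ hkiv)) hne
      · exact hpos
    have hkj : 1 ≤ kj := by
      rcases Nat.eq_zero_or_pos kj with hz | hpos
      · exact absurd (hsj0.symm.trans (hz ▸ hkjv)) hne
      · exact hpos
    exact noReconnect hT hsi hsj (hsi0.trans hsj0.symm) hne2 hki hkj (hkiv.trans hkjv.symm)
  have D01 := pair hT h0 h1 h0' h1' ha0 ha1 hd01 hb0 hb1 hx0 hx1
  have D02 := pair hT h0 h2 h0' h2' ha0 ha2 hd02 hb0 hb2 hx0 hx2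
  have D12 := pair hT h1 h2 h1' h2' ha1 ha2 hd12 hb1 hb2 hx1 hx2
  rcases D01 with ⟨k, _, hk⟩ | ⟨k, _, hk⟩
  · rcases D12 with ⟨l, _, hl⟩ | ⟨l, _, hl⟩
    · exact key s0 s1 k l h0' h1' hb0 hb1 hd01' hk hl
    · exact key s0 s2 k l h0' h2' hb0 hb2 hd02' hk hl
  · rcases D02 with ⟨l, _, hl⟩ | ⟨l, _, hl⟩
    · exact key s0 s1 l k h0' h1' hb0 hb1 hd01' hl hk
    · exact key s1 s2 k l h1' h2' hb1 hb2 hd12' hk hl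

end Crossroad

open Crossroad in
/-- In a locally finite tree, for any three pairwise inequivalent rays
`e₀, e₁, e₂` there is a unique vertex `v` (the crossroad of the corresponding
three ends) from which one can start rays `r₀, r₁, r₂` equivalent to
`e₀, e₁, e₂` respectively, whose second vertices are pairwise distinct. -/
theorem statement7 {V : Type*} (G : SimpleGraph V) (hT : G.IsTree)
    (hlf : ∀ v : V, (G.neighborSet v).Finite)
    (e₀ e₁ e₂ : ℕ → V) (h₀ : IsRay G e₀) (h₁ : IsRay G e₁) (h₂ : IsRay G e₂)
    (h01 : ¬ RayEquiv e₀ e₁) (h02 : ¬ RayEquiv e₀ e₂) (h12 : ¬ RayEquiv e₁ e₂) :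
    ∃! v : V, ∃ r₀ r₁ r₂ : ℕ → V,
      IsRay G r₀ ∧ IsRay G r₁ ∧ IsRay G r₂ ∧
      r₀ 0 = v ∧ r₁ 0 = v ∧ r₂ 0 = v ∧
      RayEquiv r₀ e₀ ∧ RayEquiv r₁ e₁ ∧ RayEquiv r₂ e₂ ∧
      r₀ 1 ≠ r₁ 1 ∧ r₀ 1 ≠ r₂ 1 ∧ r₁ 1 ≠ r₂ 1 := by
  obtain ⟨f0, hf0, hf00, hf0e⟩ := exists_ray_from hT (e₀ 0) h₀
  obtain ⟨f1, hf1, hf10, hf1e⟩ := exists_ray_from hT (e₀ 0) h₁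
  obtain ⟨f2, hf2, hf20, hf2e⟩ := exists_ray_from hT (e₀ 0) h₂
  have ne01 : f0 ≠ f1 := fun hEq =>
    h01 (rayEquiv_trans (rayEquiv_symm hf0e) (by rw [hEq]; exact hf1e))
  have ne02 : f0 ≠ f2 := fun hEq =>
    h02 (rayEquiv_trans (rayEquiv_symm hf0e) (by rw [hEq]; exact hf2e))
  have ne12 : f1 ≠ f2 := fun hEq =>
    h12 (rayEquiv_trans (rayEquiv_symm hf1e) (by rw [hEq]; exact hf2e))
  obtain ⟨a, ha1, ha2⟩ := split_exists (hf00.trans hf10.symm) ne01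
  obtain ⟨b, hb1, hb2⟩ := split_exists (hf00.trans hf20.symm) ne02
  obtain ⟨c, hc1, hc2⟩ := split_exists (hf10.trans hf20.symm) ne12
  -- min inequalities
  have hm1 : min a b ≤ c := split_ge_min ha1 hb1 hc2
  have hm2 : min b c ≤ a := split_ge_min (fun k hk => (hb1 k hk).symm) (fun k hk => (hc1 k hk).symm) ha2
  have hm3 : min a c ≤ b := split_ge_min (fun k hk => (ha1 k hk).symm) hc1 hb2
  have mainex : ∃ v : V, ∃ r₀ r₁ r₂ : ℕ → V,
      IsRay G r₀ ∧ IsRay G r₁ ∧ IsRay G r₂ ∧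
      r₀ 0 = v ∧ r₁ 0 = v ∧ r₂ 0 = v ∧
      RayEquiv r₀ e₀ ∧ RayEquiv r₁ e₁ ∧ RayEquiv r₂ e₂ ∧
      r₀ 1 ≠ r₁ 1 ∧ r₀ 1 ≠ r₂ 1 ∧ r₁ 1 ≠ r₂ 1 := by
    rcases le_total a b with hab | hba
    · rcases le_total c b with hcb | hbc
      · -- max is b : core f0 f1 f2
        have hac : a = c := by omega
        obtain ⟨v, rf, rg, rh, Hf, Hg, Hh, H0, H1, H2, Ef, Eg, Eh, Dfg, Dfh, Dgh⟩ :=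
          core hT hf0 hf1 hf2 hab ha1 ha2 hb1 hb2 (by rw [hac]; exact hc2)
        exact ⟨v, rf, rg, rh, Hf, Hg, Hh, H0, H1, H2,
          rayEquiv_trans Ef hf0e, rayEquiv_trans Eg hf1e, rayEquiv_trans Eh hf2e,
          Dfg, Dfh, Dgh⟩
      · -- max is c : core f1 f0 f2
        have haeb : a = b := by omega
        obtain ⟨v, rf, rg, rh, Hf, Hg, Hh, H0, H1, H2, Ef, Eg, Eh, Dfg, Dfh, Dgh⟩ :=
          core hT hf1 hf0 hf2 (by omega : a ≤ c) (fun k hk => (ha1 k hk).symm) ha2.symm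
            hc1 hc2 (by rw [haeb]; exact hb2)
        exact ⟨v, rg, rf, rh, Hg, Hf, Hh, H1, H0, H2,
          rayEquiv_trans Eg hf0e, rayEquiv_trans Ef hf1e, rayEquiv_trans Eh hf2e,
          Dfg.symm, Dgh, Dfh⟩
    · rcases le_total c a with hca | hac
      · -- max is a : core f0 f2 f1
        have hbc : b = c := by omega
        obtain ⟨v, rf, rg, rh, Hf, Hg, Hh, H0, H1, H2, Ef, Eg, Eh, Dfg, Dfh, Dgh⟩ :=
          core hT hf0 hf2 hf1 hba hb1 hb2 ha1 ha2 (by rw [hbc]; exact hc2.symm)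
        exact ⟨v, rf, rh, rg, Hf, Hh, Hg, H0, H2, H1,
          rayEquiv_trans Ef hf0e, rayEquiv_trans Eh hf1e, rayEquiv_trans Eg hf2e,
          Dfh, Dfg, Dgh.symm⟩
      · -- max is c : core f1 f0 f2
        have haeb : a = b := by omega
        obtain ⟨v, rf, rg, rh, Hf, Hg, Hh, H0, H1, H2, Ef, Eg, Eh, Dfg, Dfh, Dgh⟩ :=
          core hT hf1 hf0 hf2 hac (fun k hk => (ha1 k hk).symm) ha2.symm
            hc1 hc2 (by rw [haeb]; exact hb2)
        exact ⟨v, rg, rf, rh, Hg, Hf, Hh, H1, H0, H2,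
          rayEquiv_trans Eg hf0e, rayEquiv_trans Ef hf1e, rayEquiv_trans Eh hf2e,
          Dfg.symm, Dgh, Dfh⟩
  obtain ⟨v, hv⟩ := mainex
  refine ⟨v, hv, ?_⟩
  rintro v' ⟨s0, s1, s2, hs0, hs1, hs2, hs00, hs10, hs20, hse0, hse1, hse2, hsd01, hsd02, hsd12⟩
  obtain ⟨r0, r1, r2, hr0, hr1, hr2, hr00, hr10, hr20, hre0, hre1, hre2, hrd01, hrd02, hrd12⟩ := hv
  exact crossroad_unique hT hr0 hr1 hr2 hs0 hs1 hs2 hr00 hr10 hr20 hs00 hs10 hs20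
    hrd01 hrd02 hrd12 hsd01 hsd02 hsd12
    (rayEquiv_trans hre0 (rayEquiv_symm hse0))
    (rayEquiv_trans hre1 (rayEquiv_symm hse1))
    (rayEquiv_trans hre2 (rayEquiv_symm hse2))
end

section
/- Assume A is irreducible, i.e., for all a, b ∈ W there exists n ≥ 1 with (Aⁿ)(a,b) > 0. Then the pullback along the restriction map S_A → S_A⁺, ω ↦ (ω_k)_{k≥0}, induces an isomorphism of abelian groups C(S_A⁺,ℤ)/δ(C(S_A⁺,ℤ)) ≅ C(S_A,ℤ)_T, where δ(f) = f − f∘σ on the one-sided shift space; that is, every class in the cokernel of f ↦ f − f∘T on C(S_A,ℤ) is represented by a function of the nonnegative coordinates, uniquely up to δ of such a function. -/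
set_option linter.unusedSectionVars false
set_option maxHeartbeats 1000000


/-- The two-sided subshift of finite type attached to a 0-1 matrix `A`. -/
abbrev SubshiftZ {W : Type} (A : Matrix W W ℕ) : Type :=
  {ω : ℤ → W // ∀ k : ℤ, A (ω k) (ω (k + 1)) = 1}

/-- The one-sided subshift of finite type attached to a 0-1 matrix `A`. -/
abbrev SubshiftN {W : Type} (A : Matrix W W ℕ) : Type :=
  {ω : ℕ → W // ∀ k : ℕ, A (ω k) (ω (k + 1)) = 1}

variable {W : Type} [Fintype W] [DecidableEq W] [TopologicalSpace W] [DiscreteTopology W]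

/-- The shift `T` on the two-sided subshift, as a continuous map. -/
def shiftZc (A : Matrix W W ℕ) : C(SubshiftZ A, SubshiftZ A) where
  toFun ω := ⟨fun k => ω.1 (k + 1), fun k => ω.2 (k + 1)⟩
  continuous_toFun := by
    apply Continuous.subtype_mk
    exact continuous_pi fun k => (continuous_apply (k + 1)).comp continuous_subtype_val

/-- The shift `σ` on the one-sided subshift, as a continuous map. -/
def shiftNc (A : Matrix W W ℕ) : C(SubshiftN A, SubshiftN A) where
  toFun ω := ⟨fun k => ω.1 (k + 1), fun k => ω.2 (k + 1)⟩
  continuous_toFun := by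
    apply Continuous.subtype_mk
    exact continuous_pi fun k => (continuous_apply (k + 1)).comp continuous_subtype_val

/-- The restriction map `S_A → S_A⁺`, `ω ↦ (ω_k)_{k ≥ 0}`, as a continuous map. -/
def resMapc (A : Matrix W W ℕ) : C(SubshiftZ A, SubshiftN A) :=
  ⟨fun ω => ⟨fun n => ω.1 (n : ℤ), fun n => by
      have h := ω.2 (n : ℤ)
      rwa [show ((n : ℤ) + 1) = ((n + 1 : ℕ) : ℤ) by push_cast; ring] at h⟩,
    by
      apply Continuous.subtype_mk
      exact continuous_pi fun n => (continuous_apply ((n : ℤ))).comp continuous_subtype_val⟩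

/-- The subgroup of coboundaries `{f - f∘T}` of `C(X, ℤ)`. -/
noncomputable def cobound {X : Type} [TopologicalSpace X] (T : C(X, X)) :
    AddSubgroup C(X, ℤ) :=
  AddMonoidHom.range (AddMonoidHom.mk' (fun f : C(X, ℤ) => f - f.comp T)
    (fun a b => by ext x; simp [ContinuousMap.comp_apply]; ring))

namespace Aux13

def shiftZn (A : Matrix W W ℕ) (n : ℕ) : C(SubshiftZ A, SubshiftZ A) where
  toFun ω := ⟨fun k => ω.1 (k + n), fun k => by
    have := ω.2 (k + n); rwa [show (k + (n:ℤ)) + 1 = (k+1) + (n:ℤ) by ring] at this⟩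
  continuous_toFun := by
    apply Continuous.subtype_mk
    exact continuous_pi fun k => (continuous_apply _).comp continuous_subtype_val

def shiftNn (A : Matrix W W ℕ) (n : ℕ) : C(SubshiftN A, SubshiftN A) where
  toFun ω := ⟨fun k => ω.1 (k + n), fun k => by
    have := ω.2 (k + n); rwa [show (k + n) + 1 = (k+1) + n by ring] at this⟩
  continuous_toFun := by
    apply Continuous.subtype_mk
    exact continuous_pi fun k => (continuous_apply _).comp continuous_subtype_val

lemma shiftZn_apply (A : Matrix W W ℕ) (n : ℕ) (ω : SubshiftZ A) (k : ℤ) :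
    ((shiftZn A n) ω).1 k = ω.1 (k + n) := rfl

lemma shiftZn_zero (A : Matrix W W ℕ) (ω : SubshiftZ A) : (shiftZn A 0) ω = ω := by
  apply Subtype.ext; funext k; simp [shiftZn_apply]

lemma shiftZn_shiftZc (A : Matrix W W ℕ) (j : ℕ) (ω : SubshiftZ A) :
    (shiftZn A j) ((shiftZc A) ω) = (shiftZn A (j+1)) ω := by
  apply Subtype.ext; funext k
  show ω.1 (k + j + 1) = ω.1 (k + ((j:ℕ)+1 : ℕ))
  congr 1; push_cast; ring

lemma shiftNn_apply (A : Matrix W W ℕ) (n : ℕ) (ω : SubshiftN A) (k : ℕ) :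
    ((shiftNn A n) ω).1 k = ω.1 (k + n) := rfl

lemma shiftNn_zero (A : Matrix W W ℕ) (ω : SubshiftN A) : (shiftNn A 0) ω = ω := by
  apply Subtype.ext; funext k; simp [shiftNn_apply]

lemma shiftNn_shiftNc (A : Matrix W W ℕ) (j : ℕ) (ω : SubshiftN A) :
    (shiftNn A j) ((shiftNc A) ω) = (shiftNn A (j+1)) ω := by
  apply Subtype.ext; funext k
  rfl

lemma mem_cobound {X : Type} [TopologicalSpace X] (T : C(X, X)) (g : C(X, ℤ)) :
    g ∈ cobound T ↔ ∃ h : C(X, ℤ), h - h.comp T = g := by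
  constructor
  · rintro ⟨h, rfl⟩; exact ⟨h, rfl⟩
  · rintro ⟨h, rfl⟩; exact ⟨h, rfl⟩

lemma tele_Z (A : Matrix W W ℕ) (g : C(SubshiftZ A, ℤ)) (n : ℕ) :
    g - g.comp (shiftZn A n) ∈ cobound (shiftZc A) := by
  rw [mem_cobound]
  refine ⟨∑ j ∈ Finset.range n, g.comp (shiftZn A j), ?_⟩
  ext ω
  simp only [ContinuousMap.sub_apply, ContinuousMap.comp_apply, ContinuousMap.sum_apply]
  rw [← Finset.sum_sub_distrib]
  have : ∀ j ∈ Finset.range n,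
      g ((shiftZn A j) ω) - g ((shiftZn A j) ((shiftZc A) ω))
        = (fun j => g ((shiftZn A j) ω)) j - (fun j => g ((shiftZn A j) ω)) (j+1) := by
    intro j _; simp [shiftZn_shiftZc]
  rw [Finset.sum_congr rfl this, Finset.sum_range_sub']
  simp [shiftZn_zero]

lemma tele_N (A : Matrix W W ℕ) (g : C(SubshiftN A, ℤ)) (n : ℕ) :
    g - g.comp (shiftNn A n) ∈ cobound (shiftNc A) := by
  rw [mem_cobound]
  refine ⟨∑ j ∈ Finset.range n, g.comp (shiftNn A j), ?_⟩
  ext ω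
  simp only [ContinuousMap.sub_apply, ContinuousMap.comp_apply, ContinuousMap.sum_apply]
  rw [← Finset.sum_sub_distrib]
  have : ∀ j ∈ Finset.range n,
      g ((shiftNn A j) ω) - g ((shiftNn A j) ((shiftNc A) ω))
        = (fun j => g ((shiftNn A j) ω)) j - (fun j => g ((shiftNn A j) ω)) (j+1) := by
    intro j _; simp [shiftNn_shiftNc]
  rw [Finset.sum_congr rfl this, Finset.sum_range_sub']
  simp [shiftNn_zero]


instance compactZ (A : Matrix W W ℕ) : CompactSpace (SubshiftZ A) := by
  have hcl : IsClosed {ω : ℤ → W | ∀ k : ℤ, A (ω k) (ω (k + 1)) = 1} := by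
    have : {ω : ℤ → W | ∀ k : ℤ, A (ω k) (ω (k + 1)) = 1}
        = ⋂ k : ℤ, (fun ω : ℤ → W => (ω k, ω (k+1))) ⁻¹' {p : W × W | A p.1 p.2 = 1} := by
      ext ω; simp [Set.mem_iInter]
    rw [this]
    exact isClosed_iInter fun k => (isClosed_discrete _).preimage
      (((continuous_apply k).prodMk (continuous_apply (k+1))))
  exact isCompact_iff_compactSpace.mp (hcl.isCompact)

lemma exists_dep (A : Matrix W W ℕ) (f : C(SubshiftZ A, ℤ)) :
    ∃ n : ℕ, ∀ ω μ : SubshiftZ A, (∀ k : ℤ, |k| ≤ (n:ℤ) → ω.1 k = μ.1 k) → f ω = f μ := by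
  by_contra hcon
  push_neg at hcon
  set C : ℕ → Set (SubshiftZ A × SubshiftZ A) :=
    fun n => {p | (∀ k : ℤ, |k| ≤ (n:ℤ) → p.1.1 k = p.2.1 k) ∧ f p.1 ≠ f p.2} with hC
  have hclosed : ∀ n, IsClosed (C n) := by
    intro n
    have h1 : IsClosed {p : SubshiftZ A × SubshiftZ A | ∀ k : ℤ, |k| ≤ (n:ℤ) → p.1.1 k = p.2.1 k} := by
      have : {p : SubshiftZ A × SubshiftZ A | ∀ k : ℤ, |k| ≤ (n:ℤ) → p.1.1 k = p.2.1 k}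
          = ⋂ k : ℤ, {p : SubshiftZ A × SubshiftZ A | |k| ≤ (n:ℤ) → p.1.1 k = p.2.1 k} := by
        ext p; simp [Set.mem_iInter]
      rw [this]
      refine isClosed_iInter fun k => ?_
      by_cases hk : |k| ≤ (n:ℤ)
      · simp only [hk, forall_true_left]
        exact isClosed_eq
          ((continuous_apply k).comp (continuous_subtype_val.comp continuous_fst))
          ((continuous_apply k).comp (continuous_subtype_val.comp continuous_snd))
      · simp only [hk, false_implies, Set.setOf_true]
        exact isClosed_univ
    have h2 : IsClosed {p : SubshiftZ A × SubshiftZ A | f p.1 ≠ f p.2} := by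
      have : {p : SubshiftZ A × SubshiftZ A | f p.1 ≠ f p.2}
          = (fun p : SubshiftZ A × SubshiftZ A => (f p.1, f p.2)) ⁻¹' {q : ℤ × ℤ | q.1 ≠ q.2} := by
        rfl
      rw [this]
      exact (isClosed_discrete _).preimage
        ((f.continuous.comp continuous_fst).prodMk (f.continuous.comp continuous_snd))
    exact h1.inter h2
  have hne : ∀ n, (C n).Nonempty := by
    intro n
    obtain ⟨ω, μ, h1, h2⟩ := hcon n
    exact ⟨(ω, μ), h1, h2⟩
  have hdir : Directed (fun x1 x2 => x1 ⊇ x2) C := by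
    intro m n
    refine ⟨max m n, fun p hp => ⟨fun k hk => hp.1 k (hk.trans (by exact_mod_cast le_max_left m n)), hp.2⟩,
      fun p hp => ⟨fun k hk => hp.1 k (hk.trans (by exact_mod_cast le_max_right m n)), hp.2⟩⟩
  obtain ⟨p, hp⟩ := IsCompact.nonempty_iInter_of_directed_nonempty_isCompact_isClosed C hdir hne
    (fun n => (hclosed n).isCompact) hclosed
  simp only [Set.mem_iInter] at hp
  have heq : p.1 = p.2 := by
    apply Subtype.ext; funext k
    exact (hp k.natAbs).1 k (by rw [Int.abs_eq_natAbs])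
  exact (hp 0).2 (by rw [heq])


lemma exists_pred (A : Matrix W W ℕ) (hA01 : ∀ a b, A a b = 0 ∨ A a b = 1)
    (hirr : ∀ a b : W, ∃ n : ℕ, 1 ≤ n ∧ 0 < (A ^ n) a b) (b : W) :
    ∃ a : W, A a b = 1 := by
  obtain ⟨n, hn1, hpos⟩ := hirr b b
  -- find c with 0 < A c b
  have key : ∀ m : ℕ, ∀ a : W, 0 < (A ^ (m+1)) a b → ∃ c, 0 < A c b := by
    intro m
    induction m with
    | zero => intro a ha; rw [pow_one] at ha; exact ⟨a, ha⟩
    | succ m ih =>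
      intro a ha
      rw [pow_succ, Matrix.mul_apply] at ha
      obtain ⟨c, _, hc⟩ := Finset.exists_ne_zero_of_sum_ne_zero ha.ne'
      have : 0 < A c b := Nat.pos_of_ne_zero fun h => hc (by simp [h])
      exact ⟨c, this⟩
  obtain ⟨m, rfl⟩ := Nat.exists_eq_add_of_le hn1
  obtain ⟨c, hc⟩ := key m b (by rwa [Nat.add_comm] at hpos)
  rcases hA01 c b with h | h
  · omega
  · exact ⟨c, h⟩

variable (A : Matrix W W ℕ) (hA01 : ∀ a b, A a b = 0 ∨ A a b = 1)
    (hirr : ∀ a b : W, ∃ n : ℕ, 1 ≤ n ∧ 0 < (A ^ n) a b)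

noncomputable def pred (b : W) : W := Classical.choose (exists_pred A hA01 hirr b)

lemma pred_spec (b : W) : A (pred A hA01 hirr b) b = 1 :=
  Classical.choose_spec (exists_pred A hA01 hirr b)

/-- Left extension of a one-sided sequence to a two-sided one. -/
noncomputable def extc : C(SubshiftN A, SubshiftZ A) where
  toFun η := ⟨fun k => if h : 0 ≤ k then η.1 k.toNat else (pred A hA01 hirr)^[(-k).toNat] (η.1 0),
    by
      intro k
      by_cases hk : 0 ≤ k
      · have hk1 : 0 ≤ k + 1 := by omega
        simp only [dif_pos hk, dif_pos hk1]
        have : (k+1).toNat = k.toNat + 1 := by omega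
        rw [this]; exact η.2 k.toNat
      · by_cases hk1 : 0 ≤ k + 1
        · -- k = -1
          have hk' : k = -1 := by omega
          subst hk'
          simp only [dif_neg hk, dif_pos hk1]
          norm_num
          exact pred_spec A hA01 hirr (η.1 0)
        · simp only [dif_neg hk, dif_neg hk1]
          have h1 : (-k).toNat = (-(k+1)).toNat + 1 := by omega
          rw [h1, Function.iterate_succ_apply']
          exact pred_spec A hA01 hirr _⟩
  continuous_toFun := by
    apply Continuous.subtype_mk
    refine continuous_pi fun k => ?_
    by_cases hk : 0 ≤ k
    · simp only [dif_pos hk]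
      exact (continuous_apply k.toNat).comp continuous_subtype_val
    · simp only [dif_neg hk]
      exact (continuous_of_discreteTopology).comp
        ((continuous_apply 0).comp continuous_subtype_val)

lemma extc_nonneg (η : SubshiftN A) (k : ℤ) (hk : 0 ≤ k) :
    ((extc A hA01 hirr) η).1 k = η.1 k.toNat := dif_pos hk

lemma extc_res (ω : SubshiftZ A) (k : ℤ) (hk : 0 ≤ k) :
    ((extc A hA01 hirr) (⟨fun n => ω.1 (n : ℤ), fun n => by
      have h := ω.2 (n : ℤ)
      rwa [show ((n : ℤ) + 1) = ((n + 1 : ℕ) : ℤ) by push_cast; ring] at h⟩ : SubshiftN A)).1 k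
      = ω.1 k := by
  rw [extc_nonneg A hA01 hirr _ k hk]
  simp [Int.toNat_of_nonneg hk]

end Aux13

/-- For irreducible `A`, pullback along the restriction `S_A → S_A⁺` induces an
isomorphism `C(S_A⁺, ℤ)/δ(C(S_A⁺, ℤ)) ≅ C(S_A, ℤ)_T`. -/
theorem statement13 (A : Matrix W W ℕ)
    (hA01 : ∀ a b, A a b = 0 ∨ A a b = 1)
    (hirr : ∀ a b : W, ∃ n : ℕ, 1 ≤ n ∧ 0 < (A ^ n) a b) :
    ∃ φ : (C(SubshiftN A, ℤ) ⧸ cobound (shiftNc A)) ≃+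
          (C(SubshiftZ A, ℤ) ⧸ cobound (shiftZc A)),
      ∀ f : C(SubshiftN A, ℤ),
        φ (QuotientAddGroup.mk f) = QuotientAddGroup.mk (f.comp (resMapc A)) := by
  classical
  set R : C(SubshiftN A, ℤ) →+ C(SubshiftZ A, ℤ) :=
    AddMonoidHom.mk' (fun f => f.comp (resMapc A)) (fun a b => by ext x; simp) with hR
  set π : C(SubshiftN A, ℤ) →+ (C(SubshiftZ A, ℤ) ⧸ cobound (shiftZc A)) :=
    (QuotientAddGroup.mk' (cobound (shiftZc A))).comp R with hπ
  have hcompat : ∀ f : C(SubshiftN A, ℤ),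
      (f.comp (shiftNc A)).comp (resMapc A) = (f.comp (resMapc A)).comp (shiftZc A) := by
    intro f; ext ω
    simp only [ContinuousMap.comp_apply]
    have : (shiftNc A) ((resMapc A) ω) = (resMapc A) ((shiftZc A) ω) := by
      apply Subtype.ext; funext n
      exact congrArg ω.1 (by push_cast; ring)
    rw [this]
  have hπ_apply : ∀ f : C(SubshiftN A, ℤ),
      π f = QuotientAddGroup.mk (f.comp (resMapc A)) := fun f => rfl
  have hker : cobound (shiftNc A) ≤ π.ker := by
    intro g hg
    rw [Aux13.mem_cobound] at hg
    obtain ⟨h, rfl⟩ := hg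
    rw [AddMonoidHom.mem_ker, hπ_apply]
    rw [QuotientAddGroup.eq_zero_iff]
    rw [ContinuousMap.sub_comp, hcompat, Aux13.mem_cobound]
    exact ⟨h.comp (resMapc A), rfl⟩
  set Φ := QuotientAddGroup.lift (cobound (shiftNc A)) π hker with hΦ
  have hΦ_mk : ∀ f : C(SubshiftN A, ℤ),
      Φ (QuotientAddGroup.mk f) = QuotientAddGroup.mk (f.comp (resMapc A)) := fun f => rfl
  -- commuting lemmas
  have hZcZn : ∀ (n : ℕ) (ω : SubshiftZ A),
      (shiftZc A) ((Aux13.shiftZn A n) ω) = (Aux13.shiftZn A n) ((shiftZc A) ω) := by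
    intro n ω; apply Subtype.ext; funext k
    show ω.1 (k + 1 + n) = ω.1 (k + n + 1)
    congr 1; ring
  -- the key factorization: for any continuous q on the two-sided shift depending on
  -- coordinates in [-n, n], (q ∘ Tⁿ) factors through res
  have hfact : ∀ (q : C(SubshiftZ A, ℤ)) (n : ℕ),
      (∀ ω μ : SubshiftZ A, (∀ k : ℤ, |k| ≤ (n:ℤ) → ω.1 k = μ.1 k) → q ω = q μ) →
      ((q.comp (Aux13.shiftZn A n)).comp (Aux13.extc A hA01 hirr)).comp (resMapc A)
        = q.comp (Aux13.shiftZn A n) := by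
    intro q n hq
    ext ω
    simp only [ContinuousMap.comp_apply]
    apply hq
    intro k hk
    have hk' : 0 ≤ k + n := by have := (abs_le.mp hk).1; omega
    show ((Aux13.extc A hA01 hirr) ((resMapc A) ω)).1 (k + n) = ω.1 (k + n)
    rw [Aux13.extc_nonneg A hA01 hirr _ _ hk']
    show ω.1 (((k + (n:ℤ)).toNat : ℕ) : ℤ) = ω.1 (k + n)
    rw [Int.toNat_of_nonneg hk']
  have hsurj : Function.Surjective Φ := by
    intro x
    refine QuotientAddGroup.induction_on x ?_
    intro g
    obtain ⟨n, hn⟩ := Aux13.exists_dep A g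
    refine ⟨QuotientAddGroup.mk ((g.comp (Aux13.shiftZn A n)).comp (Aux13.extc A hA01 hirr)), ?_⟩
    rw [hΦ_mk, hfact g n hn]
    rw [QuotientAddGroup.eq_iff_sub_mem]
    have := Aux13.tele_Z A g n
    have h2 := (cobound (shiftZc A)).neg_mem this
    rwa [neg_sub] at h2
  have hinj : Function.Injective Φ := by
    rw [injective_iff_map_eq_zero]
    intro x
    refine QuotientAddGroup.induction_on x ?_
    intro g hg
    rw [hΦ_mk, QuotientAddGroup.eq_zero_iff, Aux13.mem_cobound] at hg
    obtain ⟨h, hh⟩ := hg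
    obtain ⟨n, hn⟩ := Aux13.exists_dep A h
    rw [QuotientAddGroup.eq_zero_iff]
    -- g = (g - g∘σⁿ) + g∘σⁿ
    have key : g.comp (Aux13.shiftNn A n) ∈ cobound (shiftNc A) := by
      rw [Aux13.mem_cobound]
      refine ⟨(h.comp (Aux13.shiftZn A n)).comp (Aux13.extc A hA01 hirr), ?_⟩
      ext η
      simp only [ContinuousMap.sub_apply, ContinuousMap.comp_apply]
      set ω := (Aux13.extc A hA01 hirr) η with hω
      -- res (shiftZn n ω) = shiftNn n η
      have hres : (resMapc A) ((Aux13.shiftZn A n) ω) = (Aux13.shiftNn A n) η := by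
        apply Subtype.ext; funext m
        show ((Aux13.extc A hA01 hirr) η).1 ((m : ℤ) + n) = η.1 (m + n)
        rw [Aux13.extc_nonneg A hA01 hirr _ _ (by positivity)]
        have hmn : ((m:ℤ) + (n:ℤ)).toNat = m + n := by omega
        rw [hmn]
      -- h (shiftZn n (extc (σ η))) = h (shiftZn n (shiftZc ω))
      have hmid : h ((Aux13.shiftZn A n) ((Aux13.extc A hA01 hirr) ((shiftNc A) η)))
          = h ((Aux13.shiftZn A n) ((shiftZc A) ω)) := by
        apply hn
        intro k hk
        have hk' : 0 ≤ k + n := by have := (abs_le.mp hk).1; omega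
        show ((Aux13.extc A hA01 hirr) ((shiftNc A) η)).1 (k + n)
            = ((Aux13.extc A hA01 hirr) η).1 (k + n + 1)
        rw [Aux13.extc_nonneg A hA01 hirr _ _ hk', Aux13.extc_nonneg A hA01 hirr _ _ (by omega)]
        show η.1 ((k + (n:ℤ)).toNat + 1) = η.1 ((k + (n:ℤ) + 1).toNat)
        have hkn : (k + (n:ℤ) + 1).toNat = (k + (n:ℤ)).toNat + 1 := by omega
        rw [hkn]
      have hgσ : g ((Aux13.shiftNn A n) η)
          = h ((Aux13.shiftZn A n) ω) - h ((shiftZc A) ((Aux13.shiftZn A n) ω)) := by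
        have := congrArg (fun F : C(SubshiftZ A, ℤ) => F ((Aux13.shiftZn A n) ω)) hh
        simp only [ContinuousMap.sub_apply, ContinuousMap.comp_apply] at this
        rw [← hres]; exact this.symm
      rw [hgσ, hmid, hZcZn]
    have h1 := Aux13.tele_N A g n
    have := (cobound (shiftNc A)).add_mem h1 key
    rwa [sub_add_cancel] at this
  exact ⟨AddEquiv.ofBijective Φ ⟨hinj, hsurj⟩, fun f => hΦ_mk f⟩
end
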